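/- arXiv:1104.4367 — 3 statements merged into one kernel-verified Lean document; each statement's English description precedes it below -/
import Mathlib

section
/- Every connected graph H on at least 3 vertices contains a path or a cycle of length at least min(2·δ(H), |V(H)|), where the length of a path or cycle is the number of its edges. -/
/-!
Take a longest path `p = u ⋯ v`, of length `k`. All neighbours of `u` and of `v` lie on `p`.
If `k < 2δ`, then `deg u + deg v > k` and pigeonhole yields an index `i` with `u ~ pᵢ₊₁` and
`v ~ pᵢ`, which closes `p` into a cycle of length `k + 1`. If this cycle missed a vertex,
connectivity would attach an outside vertex to it and produce a path of length `k + 1`;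
so the cycle is spanning and has length `|V|`.
-/

namespace SimpleGraph
variable {V : Type*} {G : SimpleGraph V} {u v : V}

namespace Walk

lemma exists_notMem_support_of_length_lt [Fintype V] (p : G.Walk u v)
    (h : p.length + 1 < Fintype.card V) : ∃ w, w ∉ p.support := by
  classical
  by_contra! hall
  have : Fintype.card V ≤ p.support.length :=
    calc Fintype.card V = Finset.univ.card := Finset.card_univ.symm
      _ ≤ p.support.toFinset.card := Finset.card_le_card fun w _ => by simpa using hall w
      _ ≤ p.support.length := List.toFinset_card_le _
  simp only [length_support] at this
  omega

lemma IsCycle.exists_notMem_support [Fintype V] {c : G.Walk u u} (hc : c.IsCycle)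
    (h : c.length < Fintype.card V) : ∃ w, w ∉ c.support := by
  obtain ⟨w, hw⟩ := c.tail.exists_notMem_support_of_length_lt
    (by rwa [length_tail_add_one hc.not_nil])
  refine ⟨w, fun hwc => hw ?_⟩
  rw [← cons_support_tail hc.not_nil, List.mem_cons] at hwc
  exact hwc.resolve_left (by rintro rfl; exact hw c.tail.end_mem_support)

lemma IsPath.cons_isCycle {p : G.Walk v u} (hp : p.IsPath) (h : G.Adj u v)
    (hl : 2 ≤ p.length) : (cons h p).IsCycle :=
  (cons_isCycle_iff p h).mpr ⟨hp, fun he => by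
    have := hp.length_eq_one_of_mem_edges (Sym2.eq_swap ▸ he)
    omega⟩

-- Pósa rotation: `u ⋯ pᵢ pᵢ₊₁ ⋯ v` becomes `pᵢ₊₁ ⋯ v pᵢ ⋯ u`.
lemma IsPath.exists_isPath_of_adj_getVert {p : G.Walk u v} (hp : p.IsPath) {i : ℕ}
    (hi : i < p.length) (h : G.Adj v (p.getVert i)) :
    ∃ q : G.Walk (p.getVert (i + 1)) u, q.IsPath ∧ q.length = p.length := by
  refine ⟨(p.drop (i + 1)).append (cons h (p.take i).reverse), IsPath.mk' ?_, ?_⟩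
  · rw [support_append, support_cons, List.tail_cons, support_reverse, support_take,
      drop_support_eq_support_drop_min, min_eq_left (by omega)]
    have hperm : (p.support.take (i + 1) ++ p.support.drop (i + 1)).Perm
        (p.support.drop (i + 1) ++ (p.support.take (i + 1)).reverse) :=
      List.perm_append_comm.trans ((List.reverse_perm _).symm.append_left _)
    rw [List.take_append_drop] at hperm
    exact hp.support_nodup.perm hperm
  · simp only [length_append, length_cons, length_reverse, drop_length, take_length]
    omega

open Finset in
lemma exists_adj_getVert_succ_and_adj_getVert [G.LocallyFinite] (p : G.Walk u v)
    (hu : ∀ w, G.Adj u w → w ∈ p.support) (hv : ∀ w, G.Adj v w → w ∈ p.support)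
    (h : p.length < G.degree u + G.degree v) :
    ∃ i < p.length, G.Adj u (p.getVert (i + 1)) ∧ G.Adj v (p.getVert i) := by
  classical
  set A := (range p.length).filter fun i => G.Adj u (p.getVert (i + 1))
  set B := (range p.length).filter fun i => G.Adj v (p.getVert i)
  have hA : G.degree u ≤ #A := by
    refine (card_neighborFinset_eq_degree G u).symm.trans_le <|
      (card_le_card fun w hw => ?_).trans (card_image_le (f := fun i => p.getVert (i + 1)))
    rw [mem_neighborFinset] at hw
    obtain ⟨j, rfl, hj⟩ := p.mem_support_iff_exists_getVert.mp (hu w hw)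
    obtain ⟨j, rfl⟩ := Nat.exists_eq_succ_of_ne_zero (n := j) <| by
      rintro rfl; exact hw.ne (p.getVert_zero).symm
    exact mem_image.mpr ⟨j, mem_filter.mpr ⟨mem_range.mpr (by omega), hw⟩, rfl⟩
  have hB : G.degree v ≤ #B := by
    refine (card_neighborFinset_eq_degree G v).symm.trans_le <|
      (card_le_card fun w hw => ?_).trans (card_image_le (f := p.getVert))
    rw [mem_neighborFinset] at hw
    obtain ⟨j, rfl, hj⟩ := p.mem_support_iff_exists_getVert.mp (hv w hw)
    have hjl : j ≠ p.length := by rintro rfl; exact hw.ne (p.getVert_length).symm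
    exact mem_image.mpr ⟨j, mem_filter.mpr ⟨mem_range.mpr (by omega), hw⟩, rfl⟩
  obtain ⟨i, hi⟩ := inter_nonempty_of_card_lt_card_add_card (t := A) (u := B)
    (filter_subset _ _) (filter_subset _ _) (by rw [card_range]; omega)
  simp only [A, B, mem_inter, mem_filter, mem_range] at hi
  exact ⟨i, hi.1.1, hi.1.2, hi.2.2⟩

lemma IsPath.exists_isCycle_length_eq_succ {p : G.Walk u v} (hp : p.IsPath)
    (hl : 2 ≤ p.length) {i : ℕ} (hi : i < p.length) (hu : G.Adj u (p.getVert (i + 1)))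
    (hv : G.Adj v (p.getVert i)) : ∃ c : G.Walk u u, c.IsCycle ∧ c.length = p.length + 1 := by
  obtain ⟨q, hq, hlen⟩ := hp.exists_isPath_of_adj_getVert hi hv
  exact ⟨cons hu q, hq.cons_isCycle hu (hlen ▸ hl), by rw [length_cons, hlen]⟩

end Walk

lemma Connected.exists_isPath_length_eq_of_isCycle [Fintype V] (hG : G.Connected)
    {c : G.Walk u u} (hc : c.IsCycle) (h : c.length < Fintype.card V) :
    ∃ (x y : V) (q : G.Walk x y), q.IsPath ∧ q.length = c.length := by
  classical
  obtain ⟨w, hw⟩ := hc.exists_notMem_support h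
  obtain ⟨d, -, hx, hy⟩ :=
    (hG.preconnected u w).some.exists_boundary_dart {x | x ∈ c.support} c.start_mem_support hw
  set c' := c.rotate d.fst hx
  have hc' : c'.IsCycle := hc.rotate hx
  have hy' : d.snd ∉ c'.tail.support := fun hy' =>
    hy <| (c.mem_support_rotate_iff d.fst hx).mp <| by
      rw [← Walk.cons_support_tail hc'.not_nil]; exact List.mem_cons_of_mem _ hy'
  refine ⟨_, _, c'.tail.concat d.adj, hc'.isPath_tail.concat hy' d.adj, ?_⟩
  rw [Walk.length_concat, Walk.length_tail_add_one hc'.not_nil, Walk.length_rotate]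

def Walk.IsLongestPath (p : G.Walk u v) : Prop :=
  p.IsPath ∧ ∀ ⦃x y : V⦄ (q : G.Walk x y), q.IsPath → q.length ≤ p.length

lemma exists_isLongestPath [Finite V] [Nonempty V] (G : SimpleGraph V) :
    ∃ (u v : V) (p : G.Walk u v), p.IsLongestPath := by
  obtain ⟨u, v, p, hp, hmax⟩ := Walk.exists_isPath_forall_isPath_length_le_length G
  exact ⟨u, v, p, hp, fun x y q hq => hmax x y q hq⟩

namespace Walk.IsLongestPath

variable {p : G.Walk u v}

lemma reverse (hp : p.IsLongestPath) : p.reverse.IsLongestPath :=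
  ⟨hp.1.reverse, fun _ _ q hq => (length_reverse p).symm ▸ hp.2 q hq⟩

lemma mem_support_of_adj_start (hp : p.IsLongestPath) {w : V} (h : G.Adj u w) :
    w ∈ p.support := by
  by_contra hw
  have := hp.2 _ (hp.1.cons (h := h.symm) hw)
  simp at this

lemma mem_support_of_adj_end (hp : p.IsLongestPath) {w : V} (h : G.Adj v w) :
    w ∈ p.support := by
  simpa using hp.reverse.mem_support_of_adj_start h

lemma two_le_length [Fintype V] (hp : p.IsLongestPath) (hG : G.Connected)
    (h3 : 3 ≤ Fintype.card V) : 2 ≤ p.length := by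
  by_contra! hk
  obtain ⟨w, hw⟩ := p.exists_notMem_support_of_length_lt (by omega)
  obtain ⟨d, -, hx, hy⟩ :=
    (hG.preconnected u w).some.exists_boundary_dart {x | x ∈ p.support} p.start_mem_support hw
  obtain ⟨j, hj, hjl⟩ := p.mem_support_iff_exists_getVert.mp hx
  obtain rfl | rfl : j = 0 ∨ j = p.length := by omega
  · exact hy (hp.mem_support_of_adj_start (by simpa [← hj] using d.adj))
  · exact hy (hp.mem_support_of_adj_end (by simpa [← hj] using d.adj))

end Walk.IsLongestPath

end SimpleGraph

theorem stmt_0_general {V : Type} [Fintype V] (H : SimpleGraph V)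
    [DecidableRel H.Adj] (hconn : H.Connected) (h3 : 3 ≤ Fintype.card V) :
    (∃ (u v : V) (p : H.Walk u v), p.IsPath ∧
      min (2 * H.minDegree) (Fintype.card V) ≤ p.length) ∨
    (∃ (u : V) (c : H.Walk u u), c.IsCycle ∧
      min (2 * H.minDegree) (Fintype.card V) ≤ c.length) := by
  have : Nonempty V := hconn.nonempty
  obtain ⟨u, v, p, hp⟩ := H.exists_isLongestPath
  by_cases hk : min (2 * H.minDegree) (Fintype.card V) ≤ p.length
  · exact Or.inl ⟨u, v, p, hp.1, hk⟩
  have hdeg : p.length < H.degree u + H.degree v := by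
    have := H.minDegree_le_degree u
    have := H.minDegree_le_degree v
    omega
  obtain ⟨i, hi, hui, hvi⟩ := p.exists_adj_getVert_succ_and_adj_getVert
    (fun _ => hp.mem_support_of_adj_start) (fun _ => hp.mem_support_of_adj_end) hdeg
  obtain ⟨c, hc, hcl⟩ := hp.1.exists_isCycle_length_eq_succ (hp.two_le_length hconn h3) hi hui hvi
  refine Or.inr ⟨u, c, hc, ?_⟩
  by_contra! hlt
  obtain ⟨x, y, q, hq, hql⟩ := hconn.exists_isPath_length_eq_of_isCycle hc (by omega)
  have := hp.2 q hq
  omega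

/-- Every connected graph `H` on at least 3 vertices contains a path or a cycle of
length (number of edges) at least `min (2 * δ(H)) |V(H)|`. -/
theorem stmt_0 {V : Type} [Fintype V] [DecidableEq V] (H : SimpleGraph V)
    [DecidableRel H.Adj] (hconn : H.Connected) (h3 : 3 ≤ Fintype.card V) :
    (∃ (u v : V) (p : H.Walk u v), p.IsPath ∧
      min (2 * H.minDegree) (Fintype.card V) ≤ p.length) ∨
    (∃ (u : V) (c : H.Walk u u), c.IsCycle ∧
      min (2 * H.minDegree) (Fintype.card V) ≤ c.length) :=
  stmt_0_general H hconn h3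
end

section
/- If H is a graph whose circumference (length of a longest cycle) l satisfies l > |V(H)| − δ(H), then l ≥ min(2·δ(H), |V(H)|). -/
/-!
Let `C` be a longest cycle, of length `l < |V|`, and `P` a longest path in `H - C`, with
`t + 1 ≤ |V| - l < δ` vertices. All neighbours of an end of `P` off `C` lie on `P`, so each end
has at least `δ - t ≥ 2` neighbours on `C`. If one end is adjacent to `x` on `C` and the other to
`y ≠ x`, replacing either arc of `C` between `x` and `y` by `P` must not give a longer cycle, so
both arcs have length at least `t + 2`; likewise no two consecutive vertices of `C` are adjacent
to the same end. Numbering `C` by `ZMod l`, let `B` be the set of neighbours on `C` of the second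
end: the elements of `B \ {x}` and their successors are `2 (|B| - 1)` vertices avoiding
`x - t, …, x + t + 1`, whence `l ≥ 2 |B| + 2 t ≥ 2 δ`.
-/

open Finset

theorem Finset.two_mul_card_le_of_add_one_notMem {s : Finset ℕ} {a b : ℕ} (hs : s ⊆ Icc a b)
    (h : ∀ n ∈ s, n + 1 ∉ s) : 2 * #s ≤ b + 2 - a := by
  have hdisj : Disjoint s (s.map (addRightEmbedding 1)) := by
    rw [disjoint_left]
    intro n hn hn'
    obtain ⟨m, hm, rfl⟩ := mem_map.1 hn'
    exact h m hm hn
  have hsub : s ∪ s.map (addRightEmbedding 1) ⊆ Icc a (b + 1) := by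
    intro n hn
    simp only [mem_union, mem_map, addRightEmbedding_apply] at hn
    rw [mem_Icc]
    rcases hn with hn | ⟨m, hm, rfl⟩
    · have := mem_Icc.1 (hs hn)
      omega
    · have := mem_Icc.1 (hs hm)
      omega
  calc 2 * #s = #(s ∪ s.map (addRightEmbedding 1)) := by
        rw [card_union_of_disjoint hdisj, card_map]; ring
    _ ≤ #(Icc a (b + 1)) := card_le_card hsub
    _ = b + 2 - a := by simp

theorem ZMod.val_sub_add_val_sub {n : ℕ} [NeZero n] {a b : ZMod n} (h : a ≠ b) :
    (a - b).val + (b - a).val = n := by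
  rw [← neg_sub a b, ZMod.neg_val, if_neg (sub_ne_zero.2 h)]
  have := (a - b).val_lt
  omega

theorem ZMod.two_mul_card_add_two_mul_le {l t : ℕ} [NeZero l] {B : Finset (ZMod l)}
    {x y : ZMod l}
    (hsep : ∀ j ∈ B, ∀ j' ∈ B, j ≠ j' → 2 ≤ (j' - j).val)
    (hfar : ∀ j ∈ B, j ≠ x → t + 2 ≤ (j - x).val ∧ t + 2 ≤ (x - j).val)
    (hy : y ∈ B) (hyx : y ≠ x) : 2 * #B + 2 * t ≤ l := by
  set s := (B.erase x).image fun j => (j - x).val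
  have hcard : #s = #(B.erase x) :=
    card_image_of_injective _ fun j j' h => sub_left_injective (ZMod.val_injective l h)
  have hs : s ⊆ Icc (t + 2) (l - (t + 2)) := by
    simp only [subset_iff, s, mem_image, mem_erase, mem_Icc]
    rintro _ ⟨j, ⟨hjx, hj⟩, rfl⟩
    have := hfar j hj hjx
    have := ZMod.val_sub_add_val_sub hjx
    omega
  have hsucc : ∀ n ∈ s, n + 1 ∉ s := by
    simp only [s, mem_image, mem_erase]
    rintro _ ⟨j, ⟨-, hj⟩, rfl⟩ ⟨j', ⟨-, hj'⟩, hjj'⟩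
    have hne : j ≠ j' := by rintro rfl; omega
    have hone : j' - j = 1 := by
      have := congrArg (fun n : ℕ => (n : ZMod l)) hjj'
      simp only [Nat.cast_add, Nat.cast_one, ZMod.natCast_zmod_val] at this
      linear_combination this
    have := hsep j hj j' hj' hne
    rw [hone, ZMod.val_one_eq_one_mod] at this
    have := Nat.mod_le 1 l
    omega
  have hB : #B - 1 ≤ #(B.erase x) := pred_card_le_card_erase
  have hpos : 0 < #(B.erase x) := card_pos.2 ⟨y, mem_erase.2 ⟨hyx, hy⟩⟩
  have := two_mul_card_le_of_add_one_notMem hs hsucc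
  omega

namespace SimpleGraph

variable {V : Type*} {G : SimpleGraph V}

theorem exists_isPath_adj_mem_support [Fintype V] (S : Set V) {v : V} (hv : v ∉ S) :
    ∃ (a b : V) (P : G.Walk a b), P.IsPath ∧ (∀ w ∈ P.support, w ∉ S) ∧
      (∀ w ∉ S, G.Adj a w → w ∈ P.support) ∧ (∀ w ∉ S, G.Adj b w → w ∈ P.support) := by
  let L : Set ℕ :=
    {k | ∃ (a b : V) (P : G.Walk a b), P.IsPath ∧ (∀ w ∈ P.support, w ∉ S) ∧ P.length = k}
  have hbdd : BddAbove L := ⟨Fintype.card V, by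
    rintro _ ⟨a, b, P, hP, -, rfl⟩
    exact hP.length_lt.le⟩
  have hne : L.Nonempty := ⟨0, v, v, .nil, .nil, by simpa using hv, rfl⟩
  have hstart : ∀ {a b : V} (P : G.Walk a b), P.IsPath → (∀ w ∈ P.support, w ∉ S) →
      P.length = sSup L → ∀ w ∉ S, G.Adj a w → w ∈ P.support := by
    intro a b P hP hPS hPl w hw haw
    by_contra hwP
    have hmem : P.length + 1 ∈ L := ⟨w, b, .cons haw.symm P, hP.cons hwP, by
      simpa [hw] using hPS, by simp⟩
    have := le_csSup hbdd hmem
    omega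
  obtain ⟨a, b, P, hP, hPS, hPl⟩ := Nat.sSup_mem hne hbdd
  refine ⟨a, b, P, hP, hPS, hstart P hP hPS hPl, ?_⟩
  simpa using hstart P.reverse hP.reverse (by simpa using hPS) (by simpa using hPl)

theorem Walk.IsPath.length_add_one_add_card_le [Fintype V] {ι : Type*} [Fintype ι] {g : ι → V}
    (hg : Function.Injective g) {a b : V} {P : G.Walk a b} (hP : P.IsPath)
    (hPg : ∀ v ∈ P.support, v ∉ Set.range g) :
    P.length + 1 + Fintype.card ι ≤ Fintype.card V := by
  classical
  have hdisj : Disjoint P.support.toFinset (univ.map ⟨g, hg⟩) := by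
    rw [Finset.disjoint_left]
    intro v hv hvg
    obtain ⟨i, -, rfl⟩ := mem_map.1 hvg
    exact hPg _ (List.mem_toFinset.1 hv) ⟨i, rfl⟩
  have := card_le_univ (P.support.toFinset ∪ univ.map ⟨g, hg⟩)
  rwa [card_union_of_disjoint hdisj, card_map, card_univ,
    List.toFinset_card_of_nodup hP.support_nodup, length_support] at this

theorem Walk.IsPath.degree_le_card_adj_add_length [DecidableRel G.Adj] {ι : Type*} [Fintype ι]
    (g : ι → V) {a b d : V} {P : G.Walk a b} (hP : P.IsPath) (hd : d ∈ P.support)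
    (hdP : ∀ w ∉ Set.range g, G.Adj d w → w ∈ P.support) [Fintype (G.neighborSet d)] :
    G.degree d ≤ #{i | G.Adj d (g i)} + P.length := by
  classical
  have hsub : G.neighborFinset d ⊆
      ({i | G.Adj d (g i)} : Finset ι).image g ∪ P.support.toFinset.erase d := by
    intro w hw
    rw [mem_neighborFinset] at hw
    by_cases hwg : w ∈ Set.range g
    · obtain ⟨i, rfl⟩ := hwg
      exact mem_union_left _ (mem_image_of_mem g (by simpa using hw))
    · exact mem_union_right _ (mem_erase.2 ⟨hw.ne.symm, List.mem_toFinset.2 (hdP w hwg hw)⟩)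
  have hcard : #(P.support.toFinset.erase d) = P.length := by
    rw [card_erase_of_mem (List.mem_toFinset.2 hd), List.toFinset_card_of_nodup hP.support_nodup,
      length_support, Nat.add_sub_cancel]
  calc G.degree d = #(G.neighborFinset d) := (card_neighborFinset_eq_degree G d).symm
    _ ≤ #(({i | G.Adj d (g i)} : Finset ι).image g ∪ P.support.toFinset.erase d) :=
        card_le_card hsub
    _ ≤ #{i | G.Adj d (g i)} + P.length := by
        rw [← hcard]; exact (card_union_le _ _).trans (by gcongr; exact card_image_le)

theorem Walk.IsCycle.exists_injective_zmod_adj {u : V} {c : G.Walk u u} (hc : c.IsCycle) :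
    ∃ g : ZMod c.length → V, Function.Injective g ∧ ∀ i, G.Adj (g i) (g (i + 1)) := by
  have h3 := hc.three_le_length
  have : NeZero c.length := ⟨by omega⟩
  refine ⟨fun i => c.getVert i.val, fun i j h => ?_, fun i => ?_⟩
  · exact ZMod.val_injective _
      (hc.getVert_injOn' (Nat.le_sub_one_of_lt i.val_lt) (Nat.le_sub_one_of_lt j.val_lt) h)
  · have hi := i.val_lt
    have hsucc : (i + 1).val = (i.val + 1) % c.length := by
      rw [ZMod.val_add, ZMod.val_one_eq_one_mod, Nat.mod_eq_of_lt (by omega : 1 < c.length)]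
    have hadj := c.adj_getVert_succ hi
    rcases (by omega : i.val + 1 < c.length ∨ i.val + 1 = c.length) with h | h
    · simpa only [hsucc, Nat.mod_eq_of_lt h] using hadj
    · simpa only [hsucc, h, Nat.mod_self, Walk.getVert_zero, Walk.getVert_length] using hadj

theorem Walk.IsPath.isCycle_cons_append_cons {a b c d : V} {P : G.Walk a b} {R : G.Walk c d}
    (hP : P.IsPath) (hR : R.IsPath) (hPR : P.support.Disjoint R.support) (hcd : c ≠ d)
    (hda : G.Adj d a) (hbc : G.Adj b c) : (cons hda (P.append (cons hbc R))).IsCycle := by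
  have hd : d ∉ P.support := fun h => hPR h R.end_mem_support
  have ha : a ∉ R.support := fun h => hPR P.start_mem_support h
  rw [cons_isCycle_iff, isPath_def, support_append, support_cons, List.tail_cons, edges_append,
    edges_cons]
  refine ⟨hP.support_nodup.append hR.support_nodup hPR, fun he => ?_⟩
  rcases List.mem_append.1 he with he | he
  · exact hd (P.fst_mem_support_of_mem_edges he)
  rcases List.mem_cons.1 he with he | he
  · rcases Sym2.eq_iff.1 he with ⟨rfl, -⟩ | ⟨rfl, -⟩
    · exact hd P.end_mem_support
    · exact hcd rfl
  · exact ha (R.snd_mem_support_of_mem_edges he)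

theorem exists_isPath_zmod_arc {l : ℕ} [NeZero l] {g : ZMod l → V} (hg : Function.Injective g)
    (hadj : ∀ i, G.Adj (g i) (g (i + 1))) (i : ZMod l) {k : ℕ} (hk : k < l) :
    ∃ R : G.Walk (g i) (g (i + k)), R.IsPath ∧ R.length = k ∧
      ∀ v ∈ R.support, ∃ m ≤ k, g (i + m) = v := by
  induction k with
  | zero => exact ⟨Walk.nil.copy rfl (by simp), by simp, by simp, by simp⟩
  | succ k ih =>
    obtain ⟨R, hR, hRl, hRs⟩ := ih (by omega)
    have hcast : i + k + 1 = i + ((k + 1 : ℕ) : ZMod l) := by push_cast; ring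
    have hnew : g (i + k + 1) ∉ R.support := by
      intro h
      obtain ⟨m, hm, hgm⟩ := hRs _ h
      rw [hcast] at hgm
      have := congrArg ZMod.val (add_left_cancel (hg hgm))
      rw [ZMod.val_natCast_of_lt (by omega), ZMod.val_natCast_of_lt hk] at this
      omega
    refine ⟨(R.concat (hadj _)).copy rfl (congrArg g hcast), ?_, by simp [hRl], ?_⟩
    · simpa using hR.concat hnew (hadj _)
    · intro v hv
      rw [Walk.support_copy, Walk.support_concat, List.mem_append, List.mem_singleton] at hv
      rcases hv with hv | rfl
      · obtain ⟨m, hm, hgm⟩ := hRs v hv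
        exact ⟨m, by omega, hgm⟩
      · exact ⟨k + 1, le_rfl, by rw [hcast]⟩

theorem Walk.IsPath.length_add_two_le_val_sub {l : ℕ} [NeZero l] {g : ZMod l → V}
    (hg : Function.Injective g) (hadj : ∀ i, G.Adj (g i) (g (i + 1)))
    (hmax : ∀ u (c : G.Walk u u), c.IsCycle → c.length ≤ l) {i j : ZMod l} (hij : i ≠ j)
    {a b : V} {P : G.Walk a b} (hP : P.IsPath) (hPg : ∀ v ∈ P.support, v ∉ Set.range g)
    (ha : G.Adj (g i) a) (hb : G.Adj b (g j)) : P.length + 2 ≤ (j - i).val := by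
  obtain ⟨R, hR, hRl, hRg⟩ := exists_isPath_zmod_arc hg hadj j (i - j).val_lt
  have hend : j + ((i - j).val : ZMod l) = i := by rw [ZMod.natCast_zmod_val]; ring
  have hPR : P.support.Disjoint (R.copy rfl (congrArg g hend)).support := by
    intro v hvP hvR
    rw [Walk.support_copy] at hvR
    obtain ⟨m, -, rfl⟩ := hRg v hvR
    exact hPg _ hvP ⟨_, rfl⟩
  have hcyc := hP.isCycle_cons_append_cons (by simpa using hR) hPR (hg.ne hij.symm) ha hb
  have hlen := hmax _ _ hcyc
  simp only [Walk.length_cons, Walk.length_append, Walk.length_copy, hRl] at hlen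
  have := ZMod.val_sub_add_val_sub hij
  omega

theorem Walk.IsPath.two_mul_card_adj_add_two_mul_length_le [DecidableRel G.Adj] {l : ℕ}
    [NeZero l] {g : ZMod l → V} (hg : Function.Injective g) (hadj : ∀ i, G.Adj (g i) (g (i + 1)))
    (hmax : ∀ u (c : G.Walk u u), c.IsCycle → c.length ≤ l) {a b : V} {P : G.Walk a b}
    (hP : P.IsPath) (hPg : ∀ v ∈ P.support, v ∉ Set.range g) {x y : ZMod l}
    (hx : G.Adj a (g x)) (hy : G.Adj b (g y)) (hyx : y ≠ x) :
    2 * #{i | G.Adj b (g i)} + 2 * P.length ≤ l := by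
  set B : Finset (ZMod l) := {i | G.Adj b (g i)}
  have hmem : ∀ j, j ∈ B ↔ G.Adj b (g j) := by simp [B]
  have hsep : ∀ j ∈ B, ∀ j' ∈ B, j ≠ j' → 2 ≤ (j' - j).val := by
    intro j hj j' hj' hne
    have hb : ∀ w ∈ (Walk.nil : G.Walk b b).support, w ∉ Set.range g := by
      simpa using hPg b P.end_mem_support
    simpa using IsPath.nil.length_add_two_le_val_sub hg hadj hmax hne hb ((hmem j).1 hj).symm
      ((hmem j').1 hj')
  refine ZMod.two_mul_card_add_two_mul_le hsep (fun j hj hjx => ⟨?_, ?_⟩) ((hmem y).2 hy) hyx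
  · exact hP.length_add_two_le_val_sub hg hadj hmax (Ne.symm hjx) hPg hx.symm ((hmem j).1 hj)
  · have hPg' : ∀ w ∈ P.reverse.support, w ∉ Set.range g := by simpa using hPg
    simpa using hP.reverse.length_add_two_le_val_sub hg hadj hmax hjx hPg' ((hmem j).1 hj).symm hx

end SimpleGraph

open SimpleGraph

theorem stmt_1_general {V : Type} [Fintype V] (H : SimpleGraph V)
    [DecidableRel H.Adj] (l : ℕ)
    (hex : ∃ (u : V) (c : H.Walk u u), c.IsCycle ∧ c.length = l)
    (hmax : ∀ (u : V) (c : H.Walk u u), c.IsCycle → c.length ≤ l)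
    (hl : Fintype.card V - H.minDegree < l) :
    min (2 * H.minDegree) (Fintype.card V) ≤ l := by
  obtain ⟨u, c, hc, rfl⟩ := hex
  rcases le_or_gt (Fintype.card V) c.length with hn | hn
  · exact (min_le_right _ _).trans hn
  refine (min_le_left _ _).trans ?_
  have : NeZero c.length := ⟨by have := hc.three_le_length; omega⟩
  obtain ⟨g, hg, hadj⟩ := hc.exists_injective_zmod_adj
  obtain ⟨v, hv⟩ : ∃ v, v ∉ Set.range g := by
    by_contra! h
    have := Fintype.card_le_of_surjective g h
    rw [ZMod.card] at this
    omega
  obtain ⟨a, b, P, hP, hPg, ha, hb⟩ := exists_isPath_adj_mem_support (G := H) (Set.range g) hv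
  have hPn := hP.length_add_one_add_card_le hg hPg
  rw [ZMod.card] at hPn
  have hA := (H.minDegree_le_degree a).trans
    (hP.degree_le_card_adj_add_length g P.start_mem_support ha)
  have hB := (H.minDegree_le_degree b).trans
    (hP.degree_le_card_adj_add_length g P.end_mem_support hb)
  obtain ⟨x, hx⟩ := card_pos.1 (by omega : 0 < #{i | H.Adj a (g i)})
  obtain ⟨y, hy, hyx⟩ := exists_mem_ne (by omega : 1 < #{i | H.Adj b (g i)}) x
  have := hP.two_mul_card_adj_add_two_mul_length_le hg hadj hmax hPg (mem_filter.1 hx).2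
    (mem_filter.1 hy).2 hyx
  omega

/-- If the circumference `l` of `H` (length of a longest cycle) satisfies
`l > |V(H)| - δ(H)`, then `l ≥ min (2 * δ(H)) |V(H)|`. -/
theorem stmt_1 {V : Type} [Fintype V] [DecidableEq V] (H : SimpleGraph V)
    [DecidableRel H.Adj] (l : ℕ)
    (hex : ∃ (u : V) (c : H.Walk u u), c.IsCycle ∧ c.length = l)
    (hmax : ∀ (u : V) (c : H.Walk u u), c.IsCycle → c.length ≤ l)
    (hl : Fintype.card V - H.minDegree < l) :
    min (2 * H.minDegree) (Fintype.card V) ≤ l :=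
  stmt_1_general H l hex hmax hl
end

section
/- Let P = y_1 … y_l be a longest path in a graph F, and suppose every cycle in F has at most k vertices, where δ(F) ≥ m and 2m − 1 > k and additionally l ≥ 2m. Then the neighbors of the endpoints do not 'cross': if y_i ∈ N(y_1) and y_j ∈ N(y_l), then i ≤ j. -/
/-!
Index the path as `y_0 … y_L`. Suppose `y_0 ~ y_i` and `y_L ~ y_j` with `i > j`, and let `i₀` be
the first index after `j` with `y_0 ~ y_{i₀}`. Since the path is longest, every neighbour of `y_0`
lies on it, and a neighbour `y_t` with `t ≥ 2` closes the cycle `y_0 … y_t y_0` of length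
`t + 1 ≤ k`. So all neighbour indices lie in `[1, max 2 k)`, none of them strictly between `j`
and `i₀`, whence `m ≤ deg y_0 ≤ j + (max 2 k - i₀)`. On the other hand
`y_0 … y_j y_L y_{L-1} … y_{i₀} y_0` is a cycle of length `j + (L - i₀) + 2 ≤ k`. Adding,
`m + L + 2 ≤ max 2 k + k`, which contradicts `L ≥ 2m` and `3m ≥ 2k + 3`.
-/

namespace SimpleGraph.Walk

variable {V : Type*} {G : SimpleGraph V} {u v : V}

lemma IsPath.isCycle_cons {q : G.Walk v u} (hq : q.IsPath) (h : G.Adj u v)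
    (hlen : 2 ≤ q.length) : (cons h q).IsCycle :=
  isCycle_iff_isPath_tail_and_le_length.mpr ⟨by simpa using hq, by simp; omega⟩

lemma IsPath.mem_support_of_adj_of_longest {p : G.Walk u v} (hp : p.IsPath)
    (hmax : ∀ (a b : V) (q : G.Walk a b), q.IsPath → q.length ≤ p.length) {w : V}
    (h : G.Adj u w) : w ∈ p.support := by
  by_contra hw
  simpa using hmax _ _ _ (hp.cons (h := h.symm) hw)

lemma IsPath.exists_isCycle_of_adj_getVert {p : G.Walk u v} (hp : p.IsPath) {t : ℕ}
    (ht : 2 ≤ t) (htp : t ≤ p.length) (h : G.Adj u (p.getVert t)) :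
    ∃ c : G.Walk (p.getVert t) (p.getVert t), c.IsCycle ∧ c.length = t + 1 :=
  ⟨cons h.symm (p.take t), (hp.take t).isCycle_cons h.symm (by simp; omega), by simp; omega⟩

lemma IsPath.lt_max_of_adj_getVert {p : G.Walk u v} (hp : p.IsPath) {k : ℕ}
    (hcyc : ∀ (w : V) (c : G.Walk w w), c.IsCycle → c.length ≤ k) {t : ℕ}
    (htp : t ≤ p.length) (h : G.Adj u (p.getVert t)) : t < max 2 k := by
  by_cases ht : 2 ≤ t
  · obtain ⟨c, hc, hlen⟩ := hp.exists_isCycle_of_adj_getVert ht htp h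
    have := hcyc _ c hc
    omega
  · omega

lemma IsPath.exists_isCycle_of_crossing {p : G.Walk u v} (hp : p.IsPath) {i j : ℕ}
    (hji : j < i) (hip : i < p.length) (hi : G.Adj u (p.getVert i))
    (hj : G.Adj v (p.getVert j)) :
    ∃ c : G.Walk (p.getVert i) (p.getVert i), c.IsCycle ∧ c.length = j + (p.length - i) + 2 := by
  let q := (p.take j).append (cons hj.symm (p.drop i).reverse)
  have hq : q.IsPath := by
    rw [isPath_def, support_append, support_cons, List.tail_cons, support_reverse,
      support_take, drop_support_eq_support_drop_min, min_eq_left hip.le]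
    have hsub : (p.support.take (j + 1) ++ p.support.drop i).Sublist p.support := by
      have := (List.take_sublist_take_left (l := p.support) (show j + 1 ≤ i by omega)).append
        (List.Sublist.refl (p.support.drop i))
      rwa [List.take_append_drop] at this
    exact ((List.reverse_perm _).append_left _).nodup_iff.mpr (hsub.nodup hp.support_nodup)
  have hqlen : q.length = j + (p.length - i) + 1 := by simp [q]; omega
  exact ⟨cons hi.symm q, hq.isCycle_cons hi.symm (by omega), by simp [hqlen]⟩

lemma degree_le_card_of_forall_adj_getVert_mem {a b : V} (p : G.Walk a b)
    [Fintype (G.neighborSet u)] (hsupp : ∀ w, G.Adj u w → w ∈ p.support) (S : Finset ℕ)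
    (hS : ∀ t ≤ p.length, G.Adj u (p.getVert t) → t ∈ S) : G.degree u ≤ S.card := by
  classical
  calc G.degree u = (G.neighborFinset u).card := (card_neighborFinset_eq_degree G u).symm
    _ ≤ (S.image p.getVert).card := Finset.card_le_card fun w hw => by
      obtain ⟨t, rfl, ht⟩ :=
        mem_support_iff_exists_getVert.mp (hsupp w ((mem_neighborFinset G u w).mp hw))
      exact Finset.mem_image_of_mem _ (hS t ht ((mem_neighborFinset G u _).mp hw))
    _ ≤ S.card := Finset.card_image_le

lemma degree_le_of_forall_adj_getVert_lt (p : G.Walk u v) [Fintype (G.neighborSet u)]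
    (hsupp : ∀ w, G.Adj u w → w ∈ p.support) {i j K : ℕ}
    (hK : ∀ t ≤ p.length, G.Adj u (p.getVert t) → t < K)
    (hgap : ∀ t, j < t → t < i → ¬ G.Adj u (p.getVert t)) : G.degree u ≤ j + (K - i) := by
  calc G.degree u ≤ (Finset.Icc 1 j ∪ Finset.Ico i K).card := by
        refine p.degree_le_card_of_forall_adj_getVert_mem hsupp _ fun t htp h => ?_
        have ht0 : t ≠ 0 := by rintro rfl; exact h.ne (p.getVert_zero).symm
        have := hK t htp h
        have : ¬ (j < t ∧ t < i) := fun hti => hgap t hti.1 hti.2 h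
        simp only [Finset.mem_union, Finset.mem_Icc, Finset.mem_Ico]
        omega
    _ ≤ j + (K - i) := (Finset.card_union_le _ _).trans (by simp)

end SimpleGraph.Walk

theorem stmt_15_general {V : Type} [Fintype V] (F : SimpleGraph V)
    [DecidableRel F.Adj] (m k : ℕ)
    (hm : m ≤ F.minDegree) (h3m : 2 * k + 3 ≤ 3 * m)
    (y₁ yₗ : V) (p : F.Walk y₁ yₗ) (hpath : p.IsPath)
    (hmax : ∀ (u v : V) (q : F.Walk u v), q.IsPath → q.length ≤ p.length)
    (hcyc : ∀ (u : V) (c : F.Walk u u), c.IsCycle → c.length ≤ k)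
    (hlen : 2 * m ≤ p.length) :
    ∀ (i j : ℕ) (hi : i < p.support.length) (hj : j < p.support.length),
      F.Adj y₁ (p.support.get ⟨i, hi⟩) → F.Adj yₗ (p.support.get ⟨j, hj⟩) →
        i ≤ j := by
  intro i j hi hj h₁ hₗ
  simp only [List.get_eq_getElem, SimpleGraph.Walk.support_getElem_eq_getVert] at h₁ hₗ
  rw [SimpleGraph.Walk.length_support] at hi
  by_contra! hji
  obtain ⟨i₀, ⟨hji₀, hi₀⟩, hgap⟩ : ∃ i₀, (j < i₀ ∧ F.Adj y₁ (p.getVert i₀)) ∧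
      ∀ t < i₀, ¬ (j < t ∧ F.Adj y₁ (p.getVert t)) :=
    have hex : ∃ t, j < t ∧ F.Adj y₁ (p.getVert t) := ⟨i, hji, h₁⟩
    ⟨_, Nat.find_spec hex, fun _ => Nat.find_min hex⟩
  have hi₀i : i₀ ≤ i := not_lt.mp fun hi₀ => hgap i hi₀ ⟨hji, h₁⟩
  have hK := fun t (htp : t ≤ p.length) => hpath.lt_max_of_adj_getVert hcyc htp
  have hdeg : m ≤ j + (max 2 k - i₀) :=
    hm.trans <| (F.minDegree_le_degree y₁).trans <|
      p.degree_le_of_forall_adj_getVert_lt (fun _ => hpath.mem_support_of_adj_of_longest hmax) hK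
        fun t hjt hti h => hgap t hti ⟨hjt, h⟩
  have hi₀K := hK _ (by omega) hi₀
  obtain ⟨c, hc, hclen⟩ := hpath.exists_isCycle_of_crossing hji₀ (by omega) hi₀ hₗ
  have := hcyc _ c hc
  omega

/-- Non-crossing of endpoint neighborhoods on a longest path: if `P = y₁ … y_l` is a
longest path in `F`, every cycle of `F` has at most `k` vertices, `δ(F) ≥ m`,
`2m - 1 > k`, `3m ≥ 2k + 3`, and `P` has length at least `2m`, then whenever
`y_i ∈ N(y₁)` and `y_j ∈ N(y_l)` we have `i ≤ j`. -/
theorem stmt_15 {V : Type} [Fintype V] [DecidableEq V] (F : SimpleGraph V)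
    [DecidableRel F.Adj] (m k : ℕ)
    (hm : m ≤ F.minDegree) (hk : k + 1 < 2 * m) (h3m : 2 * k + 3 ≤ 3 * m)
    (y₁ yₗ : V) (p : F.Walk y₁ yₗ) (hpath : p.IsPath)
    (hmax : ∀ (u v : V) (q : F.Walk u v), q.IsPath → q.length ≤ p.length)
    (hcyc : ∀ (u : V) (c : F.Walk u u), c.IsCycle → c.length ≤ k)
    (hlen : 2 * m ≤ p.length) :
    ∀ (i j : ℕ) (hi : i < p.support.length) (hj : j < p.support.length),
      F.Adj y₁ (p.support.get ⟨i, hi⟩) → F.Adj yₗ (p.support.get ⟨j, hj⟩) →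
        i ≤ j :=
  stmt_15_general F m k hm h3m y₁ yₗ p hpath hmax hcyc hlen
end
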